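/- arXiv:1007.3108 — 4 statements merged into one kernel-verified Lean document; each statement's English description precedes it below -/
import Mathlib

section
/- Let M_n be the group of monomial maps acting on F_q^n × F_q^n diagonally, i.e., ξ·(u,v) = (ξ(u), ξ(v)). Then the orbit of a pair (u,v) ∈ F_q^n × F_q^n under this action is exactly the set of all pairs (u',v') ∈ F_q^n × F_q^n whose second-order weight equals that of (u,v): sw(u',v') = sw(u,v). -/
open scoped Classical
open Finset MvPolynomial

noncomputable section

variable {F : Type} [Field F] [Fintype F]

/-- The set of orbits of the action of `Fˣ` on `F × F` by scalar multiplication. -/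
abbrev Orb (F : Type) [Field F] [Fintype F] : Type :=
  Quotient (MulAction.orbitRel Fˣ (F × F))

/-- The orbit of the pair `(a, b)`. -/
def orbOf (a b : F) : Orb F := Quotient.mk (MulAction.orbitRel Fˣ (F × F)) (a, b)

/-- The second-order weight of a pair of vectors. -/
def sw {ι : Type} [Fintype ι] (u v : ι → F) (S : Orb F) : ℕ :=
  (Finset.univ.filter (fun i => orbOf (u i) (v i) = S)).card

/-- The second-order weight distribution. -/
def A2 {ι : Type} [Fintype ι] (U V : Finset (ι → F)) (w : Orb F → ℕ) : ℕ :=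
  ((U ×ˢ V).filter (fun p => sw p.1 p.2 = w)).card

/-- The second-order weight enumerator. -/
def W2 {ι : Type} [Fintype ι] (U V : Finset (ι → F)) : MvPolynomial (Orb F) ℚ :=
  ∑ u ∈ U, ∑ v ∈ V, ∏ S : Orb F, (X S) ^ sw u v S

/-- The monomial map `ξ_{c,σ}`. -/
def monoMap {ι : Type} (c : ι → Fˣ) (σ : Equiv.Perm ι) (v : ι → F) : ι → F :=
  fun i => (c i : F) * v (σ.symm i)

/-!
Each coordinate of a pair `(u, v)` contributes the `Fˣ`-orbit of `(u i, v i)`, and `sw u v` counts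
how often each orbit occurs. A monomial map permutes coordinates and rescales each of them by a unit,
so it permutes these orbit labels. Conversely, equal orbit counts give a permutation matching the
labels fibre by fibre, and on each coordinate the matching labels supply the unit scalar.
-/

theorem exists_perm_comp_eq_iff_card_fiber_eq {α β : Type*} [Fintype α] [DecidableEq β]
    (f g : α → β) :
    (∃ σ : Equiv.Perm α, g ∘ σ = f) ↔ ∀ b, #{a | f a = b} = #{a | g a = b} := by
  constructor
  · rintro ⟨σ, rfl⟩ b
    exact card_bij' (fun a _ => σ a) (fun a _ => σ.symm a) (by simp) (by simp) (by simp) (by simp)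
  · intro h
    have e : ∀ b, {a // f a = b} ≃ {a // g a = b} := fun b =>
      Fintype.equivOfCardEq (by simpa [Fintype.card_subtype] using h b)
    exact ⟨Equiv.ofFiberEquiv e, funext (Equiv.ofFiberEquiv_map e)⟩

theorem orbOf_eq_orbOf_iff {a b a' b' : F} :
    orbOf a' b' = orbOf a b ↔ ∃ m : Fˣ, (m : F) * a = a' ∧ (m : F) * b = b' := by
  rw [orbOf, orbOf, Quotient.eq, MulAction.orbitRel_apply, MulAction.mem_orbit_iff]
  simp [Prod.ext_iff, Units.smul_def]

theorem sw_eq_sw_iff {ι : Type} [Fintype ι] (u v u' v' : ι → F) :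
    sw u' v' = sw u v ↔
      ∃ σ : Equiv.Perm ι, ∀ j, orbOf (u' (σ j)) (v' (σ j)) = orbOf (u j) (v j) := by
  have h := exists_perm_comp_eq_iff_card_fiber_eq (fun j => orbOf (u j) (v j))
    (fun j => orbOf (u' j) (v' j))
  simp only [funext_iff, Function.comp_apply] at h
  rw [eq_comm, funext_iff]
  exact h.symm

theorem monoMap_eq_iff {F ι : Type} [Field F] (c : ι → Fˣ) (σ : Equiv.Perm ι) (u u' : ι → F) :
    monoMap c σ u = u' ↔ ∀ j, (c (σ j) : F) * u j = u' (σ j) := by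
  rw [funext_iff, ← σ.forall_congr_right]
  simp [monoMap]

theorem exists_monoMap_eq_iff_sw_eq {ι : Type} [Fintype ι] (u v u' v' : ι → F) :
    (∃ (c : ι → Fˣ) (σ : Equiv.Perm ι), monoMap c σ u = u' ∧ monoMap c σ v = v') ↔
      sw u' v' = sw u v := by
  simp only [sw_eq_sw_iff, orbOf_eq_orbOf_iff, monoMap_eq_iff, ← forall_and, Classical.skolem]
  rw [exists_comm]
  refine exists_congr fun σ => ⟨fun ⟨c, hc⟩ => ⟨c ∘ σ, hc⟩, fun ⟨m, hm⟩ => ⟨m ∘ σ.symm, ?_⟩⟩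
  simpa using hm

/-- The orbit of a pair `(u, v)` under the diagonal action of the monomial group equals
the set of pairs with the same second-order weight. -/
theorem stmt_0 {F : Type} [Field F] [Fintype F] {n : ℕ} (u v u' v' : Fin n → F) :
    (∃ (c : Fin n → Fˣ) (σ : Equiv.Perm (Fin n)),
        monoMap c σ u = u' ∧ monoMap c σ v = v') ↔ sw u' v' = sw u v :=
  exists_monoMap_eq_iff_sw_eq u v u' v'
end
end

section
/- Let C_d = {v ∈ F_q^d : Σ_{i=1}^d v_i = 0} be the single symbol check code of length d. Then its second-order weight enumerator is W_{C_d, C_d}(x) = (1/q^2)·[ (Σ_{S∈S} x_S K_{S,S00})^d + (q−1) Σ_{T ≠ S00} (Σ_{S∈S} x_S K_{S,T})^d ], where K_{S,T} = |S| if T ⊆ S^⊥ and K_{S,T} = −1 otherwise, and S00 is the zero orbit. -/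
open scoped Classical
open Finset MvPolynomial

noncomputable section

variable {F : Type} [Field F] [Fintype F]

/-- The orbit of `S`, as a set of pairs. -/
def orbSet (S : Orb F) : Set (F × F) := {w | orbOf w.1 w.2 = S}

/-- The MacWilliams-type matrix `K`. -/
def Kmat (S T : Orb F) : ℚ :=
  if ∀ w ∈ orbSet T, ∀ s ∈ orbSet S, s.1 * w.1 + s.2 * w.2 = 0
  then ((orbSet S).ncard : ℚ) else -1

/-- The single symbol check code of length `d`. -/
def chkCode (d : ℕ) : Finset (Fin d → F) :=
  Finset.univ.filter (fun v => (∑ i, v i) = 0)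

/-! Let `ψ` be a primitive additive character of `F` with values in `ℂ`. For an orbit `S` and
`w ∈ F²`, `∑_{s ∈ S} ψ (s · w) = K_{S,[w]}`: if `s · w = 0` on `S` every term is `1`; otherwise `S`
is `Fˣ • s` with `s ≠ 0`, so the sum is `∑_{u ∈ Fˣ} ψ (u c)` with `c = s · w ≠ 0`, which is `-1`.
Hence `∑_{w ∈ F²} (∑_S K_{S,[w]} x_S)^d` expands into a sum over words `(u, v) ∈ (F²)^d` whose
coefficient `∑_w ψ ((∑ u, ∑ v) · w)` is `q²` on `C_d × C_d` and `0` elsewhere, i.e. it equals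
`q² W_{C_d,C_d}`. The theorem follows by grouping the `w ∈ F²` by orbit: the zero orbit has one
element and each other orbit `q - 1`. -/

namespace SecondOrderWeight

def pairDot {R : Type*} [CommSemiring R] (s w : R × R) : R := s.1 * w.1 + s.2 * w.2

lemma pairDot_smul_left {R : Type*} [CommRing R] (u : Rˣ) (s w : R × R) :
    pairDot (u • s) w = u * pairDot s w := by
  simp only [pairDot, Prod.smul_fst, Prod.smul_snd, Units.smul_def, smul_eq_mul]
  ring

lemma pairDot_smul_right {R : Type*} [CommRing R] (u : Rˣ) (s w : R × R) :
    pairDot s (u • w) = u * pairDot s w := by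
  simp only [pairDot, Prod.smul_fst, Prod.smul_snd, Units.smul_def, smul_eq_mul]
  ring

lemma pairDot_sum_left {R : Type*} [CommSemiring R] {ι : Type*} (s : Finset ι) (x : ι → R × R)
    (w : R × R) : pairDot (∑ i ∈ s, x i) w = ∑ i ∈ s, pairDot (x i) w := by
  simp only [pairDot, Prod.fst_sum, Prod.snd_sum, sum_mul, sum_add_distrib]

lemma orbOf_eq_orbOf_iff {p q : F × F} :
    orbOf p.1 p.2 = orbOf q.1 q.2 ↔ ∃ u : Fˣ, u • q = p :=
  Quotient.eq.trans MulAction.mem_orbit_iff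

lemma exists_orbOf (S : Orb F) : ∃ s : F × F, orbOf s.1 s.2 = S :=
  Quotient.exists_rep S

def orbFinset (S : Orb F) : Finset (F × F) := univ.filter fun p => orbOf p.1 p.2 = S

lemma mem_orbFinset {S : Orb F} {p : F × F} : p ∈ orbFinset S ↔ orbOf p.1 p.2 = S := by
  simp [orbFinset]

lemma ncard_orbSet (S : Orb F) : (orbSet S).ncard = #(orbFinset S) := by
  rw [← Set.ncard_coe_finset]
  congr 1
  ext p
  simp [orbSet, mem_orbFinset]

lemma orbFinset_orbOf (p : F × F) :
    orbFinset (orbOf p.1 p.2) = univ.image fun u : Fˣ => u • p := by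
  ext q
  simp only [mem_orbFinset, mem_image, mem_univ, true_and]
  exact orbOf_eq_orbOf_iff

lemma units_smul_left_injective {K M : Type*} [Field K] [AddCommGroup M] [Module K M] {x : M}
    (hx : x ≠ 0) : Function.Injective fun u : Kˣ => u • x :=
  (smul_left_injective K hx).comp Units.val_injective

lemma card_orbFinset_orbOf {p : F × F} (hp : p ≠ 0) :
    #(orbFinset (orbOf p.1 p.2)) = Fintype.card F - 1 := by
  rw [orbFinset_orbOf, card_image_of_injective _ (units_smul_left_injective hp), card_univ,
    Fintype.card_units]

lemma orbFinset_zero : orbFinset (orbOf (0 : F) 0) = {0} := by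
  ext p
  rw [mem_orbFinset, mem_singleton]
  constructor
  · intro h
    obtain ⟨u, rfl⟩ := (orbOf_eq_orbOf_iff (q := 0)).mp h
    exact smul_zero u
  · rintro rfl
    rfl

lemma card_orbFinset_of_ne_zero {T : Orb F} (hT : T ≠ orbOf 0 0) :
    #(orbFinset T) = Fintype.card F - 1 := by
  obtain ⟨p, rfl⟩ := exists_orbOf T
  exact card_orbFinset_orbOf fun hp => hT (by rw [hp]; rfl)

lemma orthogonal_orbits_iff (s w : F × F) :
    (∀ w' ∈ orbSet (orbOf w.1 w.2), ∀ s' ∈ orbSet (orbOf s.1 s.2), s'.1 * w'.1 + s'.2 * w'.2 = 0)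
      ↔ pairDot s w = 0 := by
  refine ⟨fun h => h w rfl s rfl, fun h w' hw' s' hs' => ?_⟩
  obtain ⟨v, rfl⟩ := orbOf_eq_orbOf_iff.mp hw'
  obtain ⟨u, rfl⟩ := orbOf_eq_orbOf_iff.mp hs'
  change pairDot (u • s) (v • w) = 0
  rw [pairDot_smul_left, pairDot_smul_right, h, mul_zero, mul_zero]

lemma Kmat_orbOf (s w : F × F) :
    Kmat (orbOf s.1 s.2) (orbOf w.1 w.2)
      = if pairDot s w = 0 then (#(orbFinset (orbOf s.1 s.2)) : ℚ) else -1 := by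
  simp only [Kmat, orthogonal_orbits_iff, ncard_orbSet]

lemma sum_units_addChar_mul {R : Type*} [CommRing R] [IsDomain R] {ψ : AddChar F R}
    (hψ : ψ.IsPrimitive) {c : F} (hc : c ≠ 0) : ∑ u : Fˣ, ψ (u * c) = -1 := by
  have h := AddChar.sum_mulShift c hψ
  rw [if_neg hc, Fintype.sum_eq_add_sum_subtype_ne _ 0, zero_mul, AddChar.map_zero_eq_one,
    ← Fintype.sum_equiv unitsEquivNeZero (fun u : Fˣ => ψ (u * c)) _ fun _ => rfl] at h
  linear_combination h

lemma _root_.AddChar.map_sum_eq_prod {A M ι : Type*} [AddCommMonoid A] [CommMonoid M]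
    (φ : AddChar A M) (s : Finset ι) (f : ι → A) : φ (∑ i ∈ s, f i) = ∏ i ∈ s, φ (f i) := by
  induction s using Finset.cons_induction with
  | empty => simp
  | cons a s _ ih => rw [sum_cons, prod_cons, AddChar.map_add_eq_mul, ih]

variable {R : Type*} [Field R] {ψ : AddChar F R}

lemma sum_orbFinset_addChar (hψ : ψ.IsPrimitive) (S : Orb F) (w : F × F) :
    ∑ p ∈ orbFinset S, ψ (pairDot p w) = (Kmat S (orbOf w.1 w.2) : R) := by
  obtain ⟨s, rfl⟩ := exists_orbOf S
  rw [Kmat_orbOf]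
  by_cases h : pairDot s w = 0
  · have hψ1 : ∀ p ∈ orbFinset (orbOf s.1 s.2), ψ (pairDot p w) = 1 := by
      intro p hp
      obtain ⟨u, rfl⟩ := orbOf_eq_orbOf_iff.mp (mem_orbFinset.mp hp)
      rw [pairDot_smul_left, h, mul_zero, AddChar.map_zero_eq_one]
    rw [sum_congr rfl hψ1, if_pos h, sum_const, nsmul_one, Rat.cast_natCast]
  · have hs : s ≠ 0 := by
      rintro rfl
      simp [pairDot] at h
    rw [if_neg h, orbFinset_orbOf, sum_image fun u _ v _ huv => units_smul_left_injective hs huv]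
    simp only [pairDot_smul_left]
    rw [sum_units_addChar_mul hψ h, Rat.cast_neg, Rat.cast_one]

lemma map_sum_Kmat_mul_X [CharZero R] (hψ : ψ.IsPrimitive) (w : F × F) :
    map (algebraMap ℚ R) (∑ S : Orb F, C (Kmat S (orbOf w.1 w.2)) * X S)
      = ∑ p : F × F, C (ψ (pairDot p w)) * X (orbOf p.1 p.2) := by
  rw [← sum_fiberwise univ fun p : F × F => orbOf p.1 p.2, map_sum]
  refine sum_congr rfl fun S _ => ?_
  change _ = ∑ p ∈ orbFinset S, _
  rw [sum_congr rfl fun p hp => congrArg (C (ψ (pairDot p w)) * X ·) (mem_orbFinset.mp hp),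
    ← sum_mul, ← map_sum, sum_orbFinset_addChar hψ, map_mul, map_C, map_X, eq_ratCast]

lemma sum_addChar_pairDot (hψ : ψ.IsPrimitive) (x : F × F) :
    ∑ w : F × F, ψ (pairDot x w) = if x = 0 then (Fintype.card F : R) ^ 2 else 0 := by
  have hsplit : ∑ w : F × F, ψ (pairDot x w)
      = (∑ a : F, ψ (a * x.1)) * ∑ b : F, ψ (b * x.2) := by
    rw [Fintype.sum_prod_type, sum_mul_sum]
    refine sum_congr rfl fun a _ => sum_congr rfl fun b _ => ?_
    rw [pairDot, ← AddChar.map_add_eq_mul, mul_comm a, mul_comm b]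
  rw [hsplit, AddChar.sum_mulShift _ hψ, AddChar.sum_mulShift _ hψ]
  by_cases h1 : x.1 = 0 <;> by_cases h2 : x.2 = 0 <;> simp [h1, h2, Prod.ext_iff, sq]

lemma sum_pow_sum_addChar (hψ : ψ.IsPrimitive) (d : ℕ) :
    ∑ w : F × F, (∑ p : F × F, C (ψ (pairDot p w)) * X (orbOf p.1 p.2)) ^ d
      = C ((Fintype.card F : R) ^ 2) * ∑ x : Fin d → F × F with ∑ i, x i = 0,
          ∏ i, (X (orbOf (x i).1 (x i).2) : MvPolynomial (Orb F) R) := by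
  have hexpand : ∀ w : F × F,
      (∑ p : F × F, C (ψ (pairDot p w)) * X (orbOf p.1 p.2)) ^ d
        = ∑ x : Fin d → F × F,
            C (ψ (pairDot (∑ i, x i) w))
              * ∏ i, (X (orbOf (x i).1 (x i).2) : MvPolynomial (Orb F) R) := by
    intro w
    simp only [Fintype.sum_pow, prod_mul_distrib, ← map_prod, ← AddChar.map_sum_eq_prod,
      pairDot_sum_left]
  simp only [hexpand]
  rw [sum_comm, mul_sum, sum_filter]
  refine sum_congr rfl fun x _ => ?_
  rw [← sum_mul, ← map_sum, sum_addChar_pairDot hψ]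
  split_ifs <;> simp

lemma W2_eq_sum_prod {ι : Type} [Fintype ι] (U V : Finset (ι → F)) :
    W2 U V = ∑ u ∈ U, ∑ v ∈ V, ∏ i, X (orbOf (u i) (v i)) := by
  refine sum_congr rfl fun u _ => sum_congr rfl fun v _ => ?_
  rw [← prod_fiberwise' univ (fun i => orbOf (u i) (v i)) X]
  exact prod_congr rfl fun S _ => (prod_const _).symm

lemma sum_filter_sum_eq_zero_eq_sum_chkCode {M : Type*} [AddCommMonoid M] (d : ℕ)
    (f : (Fin d → F × F) → M) :
    ∑ x : Fin d → F × F with ∑ i, x i = 0, f x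
      = ∑ u ∈ chkCode d, ∑ v ∈ chkCode d, f fun i => (u i, v i) := by
  rw [← sum_product']
  refine sum_equiv (Equiv.arrowProdEquivProdArrow (Fin d) (fun _ => F) (fun _ => F)) ?_
    fun _ _ => rfl
  intro x
  simp [chkCode, Prod.ext_iff, Prod.fst_sum, Prod.snd_sum]

lemma sum_orbOf {M : Type*} [AddCommMonoid M] (g : Orb F → M) :
    ∑ p : F × F, g (orbOf p.1 p.2)
      = g (orbOf 0 0) + (Fintype.card F - 1) • ∑ T ∈ univ.filter (· ≠ orbOf (0 : F) 0), g T := by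
  rw [← sum_fiberwise' univ (fun p : F × F => orbOf p.1 p.2) g, filter_ne',
    ← add_sum_erase _ _ (mem_univ (orbOf (0 : F) 0)), smul_sum]
  congr 1
  · rw [sum_const]
    change #(orbFinset (orbOf (0 : F) 0)) • _ = _
    rw [orbFinset_zero, card_singleton, one_smul]
  · refine sum_congr rfl fun T hT => ?_
    rw [sum_const]
    change #(orbFinset T) • _ = _
    rw [card_orbFinset_of_ne_zero (ne_of_mem_erase hT)]

theorem sum_pow_sum_Kmat_mul_X (d : ℕ) :
    ∑ w : F × F, (∑ S : Orb F, C (Kmat S (orbOf w.1 w.2)) * X S) ^ d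
      = C ((Fintype.card F : ℚ) ^ 2) * W2 (chkCode (F := F) d) (chkCode d) := by
  have hψ := AddChar.FiniteField.primitiveChar_to_Complex_isPrimitive F
  apply map_injective _ (algebraMap ℚ ℂ).injective
  simp only [map_sum, map_pow, map_sum_Kmat_mul_X hψ, sum_pow_sum_addChar hψ,
    sum_filter_sum_eq_zero_eq_sum_chkCode, W2_eq_sum_prod, map_mul, map_prod, map_X, map_natCast]

end SecondOrderWeight

theorem stmt_9_general {F : Type} [Field F] [Fintype F] {d : ℕ} :
    W2 (chkCode (F := F) d) (chkCode d)
      = C (1 / (Fintype.card F : ℚ) ^ 2)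
        * ((∑ S : Orb F, C (Kmat S (orbOf (0 : F) 0)) * X S) ^ d
          + C ((Fintype.card F : ℚ) - 1)
            * ∑ T ∈ Finset.univ.filter (fun T : Orb F => T ≠ orbOf (0 : F) 0),
                (∑ S : Orb F, C (Kmat S T) * X S) ^ d) := by
  have hq : (Fintype.card F : ℚ) ≠ 0 := Nat.cast_ne_zero.mpr Fintype.card_ne_zero
  have hcast : ((Fintype.card F - 1 : ℕ) : MvPolynomial (Orb F) ℚ)
      = C ((Fintype.card F : ℚ) - 1) := by
    rw [Nat.cast_sub Fintype.card_pos]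
    simp
  rw [← hcast, ← nsmul_eq_mul,
    ← SecondOrderWeight.sum_orbOf fun T => (∑ S : Orb F, C (Kmat S T) * X S) ^ d,
    SecondOrderWeight.sum_pow_sum_Kmat_mul_X, ← mul_assoc, ← C_mul, one_div,
    inv_mul_cancel₀ (pow_ne_zero 2 hq), C_1, one_mul]

/-- Second-order weight enumerator of the single symbol check code. -/
theorem stmt_9 {F : Type} [Field F] [Fintype F] {d : ℕ} (hd : 0 < d) :
    W2 (chkCode (F := F) d) (chkCode d)
      = C (1 / (Fintype.card F : ℚ) ^ 2)
        * ((∑ S : Orb F, C (Kmat S (orbOf (0 : F) 0)) * X S) ^ d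
          + C ((Fintype.card F : ℚ) - 1)
            * ∑ T ∈ Finset.univ.filter (fun T : Orb F => T ≠ orbOf (0 : F) 0),
                (∑ S : Orb F, C (Kmat S T) * X S) ^ d) :=
  stmt_9_general
end
end

section
/- Let χ: F_q → ℂ^* be the canonical additive character χ(v) = exp(2πi·Tr(v)/p), where q = p^r and Tr is the field trace to F_p. For any u, v ∈ F_q^n, Σ_{u', v' ∈ F_q^n} χ(u·u' + v·v') · Π_{S∈S} x_S^{sw(u',v')_S} = Π_{T∈S} ( Σ_{S∈S} x_S K_{S,T} )^{sw(u,v)_T}, where K_{S,T} = |S| if T ⊆ S^⊥ and K_{S,T} = −1 otherwise. -/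
/-!
Both sides factor over the coordinates, so it suffices to show, for `c ∈ F²`, that
`∑_{z ∈ F²} χ(c·z) x_{[z]} = ∑_S K_{S,[c]} x_S`. Grouping `z` by its orbit `S = F^* z₀`,
`c·z` runs over `g (c·z₀)` with `g ∈ F^*`: the character sum over `S` is `|S|` when
`c·z₀ = 0`, and otherwise the sum of the nontrivial character `χ` over `F^*`, which is `-1`.
-/

open scoped Classical
open Finset MvPolynomial

noncomputable section

variable {F : Type} [Field F] [Fintype F]

/-- The MacWilliams-type matrix `K` (with complex entries). -/
def KmatC (S T : Orb F) : ℂ :=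
  if ∀ w ∈ orbSet T, ∀ s ∈ orbSet S, s.1 * w.1 + s.2 * w.2 = 0
  then ((orbSet S).ncard : ℂ) else -1


theorem AddChar.map_sum_eq_prod_s16 {A M ι : Type*} [AddCommMonoid A] [CommMonoid M]
    (ψ : AddChar A M) (s : Finset ι) (f : ι → A) :
    ψ (∑ i ∈ s, f i) = ∏ i ∈ s, ψ (f i) := by
  induction s using Finset.cons_induction with
  | empty => simp
  | cons a s _ ih => rw [sum_cons, prod_cons, ψ.map_add_eq_mul, ih]

theorem eq_trace_of_castHom_eq_sum_pow {p r : ℕ} [Fact p.Prime] [CharP F p]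
    [Algebra (ZMod p) F] (hq : Fintype.card F = p ^ r) (t : F → ZMod p)
    (ht : ∀ v : F, ZMod.castHom (dvd_refl p) F (t v) = ∑ j ∈ Finset.range r, v ^ p ^ j) :
    t = Algebra.trace (ZMod p) F := by
  have hr : Module.finrank (ZMod p) F = r := by
    refine Nat.pow_right_injective (Fact.out : p.Prime).two_le ?_
    simp only [← hq, Module.card_eq_pow_finrank (K := ZMod p) (V := F), ZMod.card]
  funext v
  apply (ZMod.castHom (dvd_refl p) F).injective
  rw [ht, Subsingleton.elim (ZMod.castHom (dvd_refl p) F) (algebraMap (ZMod p) F),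
    FiniteField.algebraMap_trace_eq_sum_pow, Nat.card_zmod, hr]

def traceAddChar (p : ℕ) [Fact p.Prime] [Algebra (ZMod p) F] : AddChar F ℂ :=
  ZMod.stdAddChar.compAddMonoidHom (Algebra.trace (ZMod p) F).toAddMonoidHom

theorem traceAddChar_ne_one (p : ℕ) [Fact p.Prime] [Algebra (ZMod p) F] :
    traceAddChar (F := F) p ≠ 1 := by
  obtain ⟨v, hv⟩ := DFunLike.ne_iff.1 (Algebra.trace_ne_zero (ZMod p) F)
  refine AddChar.ne_one_iff.2 ⟨v, fun h => hv ?_⟩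
  rw [← AddChar.map_zero_eq_one (ZMod.stdAddChar (N := p))] at h
  exact ZMod.injective_stdAddChar h

theorem orbOf_eq_orbOf_iff_s16 {w z : F × F} :
    orbOf w.1 w.2 = orbOf z.1 z.2 ↔ ∃ g : F, g ≠ 0 ∧ g • z = w := by
  simp only [orbOf, Quotient.eq, MulAction.orbitRel_apply, MulAction.mem_orbit_iff,
    Units.smul_def]
  constructor
  · rintro ⟨g, hg⟩
    exact ⟨g, g.ne_zero, hg⟩
  · rintro ⟨g, hg, rfl⟩
    exact ⟨Units.mk0 g hg, rfl⟩

theorem filter_orbOf_eq_image_smul (z : F × F) :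
    univ.filter (fun w : F × F => orbOf w.1 w.2 = orbOf z.1 z.2)
      = (univ.erase (0 : F)).image (· • z) := by
  ext w
  simp [orbOf_eq_orbOf_iff_s16]

theorem forall_orbSet_dot_eq_zero_iff (c z : F × F) :
    (∀ w ∈ orbSet (orbOf c.1 c.2), ∀ s ∈ orbSet (orbOf z.1 z.2), s.1 * w.1 + s.2 * w.2 = 0)
      ↔ c.1 * z.1 + c.2 * z.2 = 0 := by
  refine ⟨fun h => by linear_combination h c rfl z rfl, fun hd w hw s hs => ?_⟩
  obtain ⟨g, -, rfl⟩ := orbOf_eq_orbOf_iff_s16.1 hw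
  obtain ⟨h, -, rfl⟩ := orbOf_eq_orbOf_iff_s16.1 hs
  simp only [Prod.smul_fst, Prod.smul_snd, smul_eq_mul]
  linear_combination (h * g) * hd

theorem ncard_orbSet (S : Orb F) :
    (orbSet S).ncard = #(univ.filter (fun w : F × F => orbOf w.1 w.2 = S)) := by
  rw [← Set.ncard_coe_finset]
  congr
  ext w
  simp [orbSet]

theorem sum_erase_zero_addChar_mul {ψ : AddChar F ℂ} (hψ : ψ ≠ 1) {d : F} (hd : d ≠ 0) :
    ∑ x ∈ univ.erase 0, ψ (x * d) = -1 := by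
  rw [sum_erase_eq_sub (mem_univ 0), AddChar.sum_mulShift d (AddChar.IsPrimitive.of_ne_one hψ),
    if_neg hd]
  simp

theorem sum_orbit_addChar_dot {ψ : AddChar F ℂ} (hψ : ψ ≠ 1) (c : F × F) (S : Orb F) :
    ∑ w ∈ univ.filter (fun w : F × F => orbOf w.1 w.2 = S), ψ (c.1 * w.1 + c.2 * w.2)
      = KmatC S (orbOf c.1 c.2) := by
  obtain ⟨z, rfl⟩ : ∃ z : F × F, orbOf z.1 z.2 = S := ⟨S.out, Quotient.out_eq S⟩
  rw [KmatC, ncard_orbSet]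
  split_ifs with hd <;> rw [forall_orbSet_dot_eq_zero_iff] at hd
  · have hone : ∀ w ∈ univ.filter (fun w : F × F => orbOf w.1 w.2 = orbOf z.1 z.2),
        ψ (c.1 * w.1 + c.2 * w.2) = 1 := by
      intro w hw
      obtain ⟨g, -, rfl⟩ := orbOf_eq_orbOf_iff_s16.1 (mem_filter.1 hw).2
      simp only [Prod.smul_fst, Prod.smul_snd, smul_eq_mul]
      rw [show c.1 * (g * z.1) + c.2 * (g * z.2) = 0 by linear_combination g * hd]
      exact ψ.map_zero_eq_one
    rw [sum_congr rfl hone, sum_const, nsmul_one]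
  · have hz : z ≠ 0 := by rintro rfl; simp at hd
    rw [filter_orbOf_eq_image_smul,
      sum_image fun g _ g' _ h => smul_left_injective F hz h]
    simp only [Prod.smul_fst, Prod.smul_snd, smul_eq_mul]
    rw [← sum_erase_zero_addChar_mul hψ hd]
    exact sum_congr rfl fun g _ => by ring_nf

theorem sum_C_addChar_dot_mul_X_orbOf {ψ : AddChar F ℂ} (hψ : ψ ≠ 1) (c : F × F) :
    ∑ z : F × F, C (ψ (c.1 * z.1 + c.2 * z.2)) * (X (orbOf z.1 z.2) : MvPolynomial (Orb F) ℂ)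
      = ∑ S : Orb F, C (KmatC S (orbOf c.1 c.2)) * X S := by
  rw [← sum_fiberwise univ (fun z : F × F => orbOf z.1 z.2)]
  refine sum_congr rfl fun S _ => ?_
  rw [← sum_orbit_addChar_dot hψ c S, map_sum, sum_mul]
  exact sum_congr rfl fun z hz => by rw [(mem_filter.1 hz).2]

theorem prod_pow_sw {M : Type*} {ι : Type} [CommMonoid M] [Fintype ι] (f : Orb F → M)
    (u v : ι → F) :
    ∏ S : Orb F, f S ^ sw u v S = ∏ i, f (orbOf (u i) (v i)) := by
  rw [← prod_fiberwise' univ (fun i => orbOf (u i) (v i)) f]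
  simp only [prod_const, sw]

theorem sum_sum_prod_eq_prod_sum {ι α β R : Type*} [Fintype ι] [DecidableEq ι] [Fintype α]
    [Fintype β] [CommSemiring R] (f : ι → α × β → R) :
    ∑ a : ι → α, ∑ b : ι → β, ∏ i, f i (a i, b i) = ∏ i, ∑ x, f i x := by
  rw [Fintype.prod_sum, ← Fintype.sum_prod_type']
  exact Fintype.sum_equiv (Equiv.arrowProdEquivProdArrow ι (fun _ => α) (fun _ => β)).symm _ _
    fun _ => rfl

theorem sum_C_addChar_mul_prod_X_pow_sw {ι : Type} [Fintype ι] [DecidableEq ι]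
    {ψ : AddChar F ℂ} (hψ : ψ ≠ 1) (u v : ι → F) :
    (∑ u' : ι → F, ∑ v' : ι → F, C (ψ ((∑ i, u i * u' i) + ∑ i, v i * v' i))
        * ∏ S : Orb F, (X S : MvPolynomial (Orb F) ℂ) ^ sw u' v' S)
      = ∏ T : Orb F,
          (∑ S : Orb F, C (KmatC S T) * (X S : MvPolynomial (Orb F) ℂ)) ^ sw u v T :=
  calc
    _ = ∑ u' : ι → F, ∑ v' : ι → F, ∏ i, (C (ψ (u i * u' i + v i * v' i))
          * (X (orbOf (u' i) (v' i)) : MvPolynomial (Orb F) ℂ)) := by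
      simp only [← sum_add_distrib, ψ.map_sum_eq_prod_s16, map_prod, prod_pow_sw, prod_mul_distrib]
    _ = ∏ i, ∑ z : F × F, C (ψ (u i * z.1 + v i * z.2))
          * (X (orbOf z.1 z.2) : MvPolynomial (Orb F) ℂ) :=
      sum_sum_prod_eq_prod_sum fun i z => C (ψ (u i * z.1 + v i * z.2)) * X (orbOf z.1 z.2)
    _ = ∏ i, ∑ S : Orb F, C (KmatC S (orbOf (u i) (v i))) * X S :=
      prod_congr rfl fun i _ => sum_C_addChar_dot_mul_X_orbOf hψ (u i, v i)
    _ = _ := (prod_pow_sw (fun T => ∑ S : Orb F, C (KmatC S T) * X S) u v).symm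

/-- The character-sum identity behind the MacWilliams identities for second-order
weight enumerators: `Σ_{u',v'} χ(u·u' + v·v') x^{sw(u',v')} = (xK)^{sw(u,v)}`. -/
theorem stmt_16 {p r : ℕ} [Fact p.Prime] {F : Type} [Field F] [Fintype F] [CharP F p]
    (hq : Fintype.card F = p ^ r)
    (t : F → ZMod p)
    (ht : ∀ v : F, (ZMod.castHom (dvd_refl p) F) (t v) = ∑ j ∈ Finset.range r, v ^ p ^ j)
    (χ : F → ℂ)
    (hχ : ∀ v : F, χ v
      = Complex.exp (2 * (Real.pi : ℂ) * Complex.I * ((t v).val : ℂ) / (p : ℂ)))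
    {n : ℕ} (u v : Fin n → F) :
    (∑ u' : Fin n → F, ∑ v' : Fin n → F,
        MvPolynomial.C (χ ((∑ i, u i * u' i) + ∑ i, v i * v' i))
          * ∏ S : Orb F, (MvPolynomial.X S : MvPolynomial (Orb F) ℂ) ^ sw u' v' S)
      = ∏ T : Orb F,
          (∑ S : Orb F, MvPolynomial.C (KmatC S T)
            * (MvPolynomial.X S : MvPolynomial (Orb F) ℂ)) ^ sw u v T := by
  let := ZMod.algebra F p
  obtain rfl : χ = traceAddChar p := by
    funext v
    rw [hχ, eq_trace_of_castHom_eq_sum_pow hq t ht]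
    exact (ZMod.toCircle_apply _).symm
  exact sum_C_addChar_mul_prod_X_pow_sw (traceAddChar_ne_one p) u v
end
end

section
/- Let 0 < m < n, let à be a 2-good random (n−m)×n matrix over F_q (with n−m ≥ 2), let D = {v ∈ F_q^n : Ã·v^T = 0}, and let Ξ_n be an independent uniformly distributed random monomial map on F_q^n. Then E[|Ξ_n(D)|] = q^m + 1 − q^{m−n}, and the variance satisfies E[(|Ξ_n(D)| − E[|Ξ_n(D)|])^2] = q^{m−n}(q−1)(q^n−1)(1−q^{m−n}) < q^{m+1}. -/
open scoped Classical
open Finset MvPolynomial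

noncomputable section

variable {F : Type} [Field F] [Fintype F]

/-- The linear code with parity-check matrix `M` (kernel). -/
def pchkCode {m n : ℕ} (M : Matrix (Fin m) (Fin n) F) : Finset (Fin n → F) :=
  Finset.univ.filter (fun v => M.mulVec v = 0)

/-- The cardinality of the image of the code with parity-check matrix `M` under the
monomial map with parameters `p`. -/
def imgCard {m n : ℕ} (M : Matrix (Fin m) (Fin n) F)
    (p : (Fin n → Fˣ) × Equiv.Perm (Fin n)) : ℕ :=
  ((pchkCode M).image (monoMap p.1 p.2)).card


/-!
Monomial maps are injective, so `|Ξ_n(D)| = |D|`. By rank–nullity, the kernel `D` of an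
`(n - m) × n` matrix `A` and its left kernel `{x | x A = 0}` have sizes `q ^ (n - rank A)` and
`q ^ (n - m - rank A)`, so `|D|` is `q ^ m` times the size of the left kernel. The first two
moments of the latter are sums of `P(x A = 0)` and `P(x A = 0 ∧ y A = 0)` over vectors
`x, y ∈ F^(n-m)`, and 2-goodness fixes these: `q ^ (-n)` for `x ≠ 0`, `q ^ (-2n)` for linearly
independent `x, y`, and `x A = 0` alone when `y` is a multiple of `x`.
-/

open Matrix

section Kernel

variable {ι κ : Type} [Fintype ι] [Fintype κ]

lemma card_filter_mulVec_eq_zero [DecidableEq ι] (M : Matrix κ ι F) :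
    #{v | M *ᵥ v = 0} = Fintype.card F ^ (Fintype.card ι - M.rank) := by
  have hker : Module.finrank F (LinearMap.ker M.mulVecLin) = Fintype.card ι - M.rank := by
    have := LinearMap.finrank_range_add_finrank_ker M.mulVecLin
    rw [Module.finrank_fintype_fun_eq_card] at this
    rw [Matrix.rank]
    omega
  rw [← hker, ← Module.card_eq_pow_finrank, Fintype.card_subtype]
  simp [LinearMap.mem_ker]

lemma card_filter_vecMul_eq_zero [DecidableEq κ] (M : Matrix κ ι F) :
    #{x | x ᵥ* M = 0} = Fintype.card F ^ (Fintype.card κ - M.rank) := by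
  simpa [Matrix.mulVec_transpose] using card_filter_mulVec_eq_zero Mᵀ

lemma card_filter_mulVec_eq_zero_eq_pow_mul [DecidableEq ι] [DecidableEq κ] (M : Matrix κ ι F)
    (h : Fintype.card κ ≤ Fintype.card ι) :
    #{v | M *ᵥ v = 0}
      = Fintype.card F ^ (Fintype.card ι - Fintype.card κ) * #{x | x ᵥ* M = 0} := by
  rw [card_filter_mulVec_eq_zero, card_filter_vecMul_eq_zero, ← pow_add]
  have := M.rank_le_card_height
  congr 1
  omega

end Kernel

section Probability

variable {Ω : Type} [Fintype Ω]

def prob (P : Ω → ℚ) (E : Ω → Prop) : ℚ :=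
  ∑ ω ∈ univ.filter E, P ω

lemma prob_of_forall (P : Ω → ℚ) {E : Ω → Prop} (h : ∀ ω, E ω) :
    prob P E = ∑ ω, P ω := by
  simp [prob, h]

lemma prob_congr (P : Ω → ℚ) {E E' : Ω → Prop}
    (h : ∀ ω, E ω ↔ E' ω) : prob P E = prob P E' := by
  simp only [prob, h]

lemma prob_eq_sum_prob_and {β : Type} [Fintype β] (P : Ω → ℚ) (E : Ω → Prop)
    (g : Ω → β) : prob P E = ∑ b, prob P (fun ω => E ω ∧ g ω = b) := by
  rw [prob, ← Finset.sum_fiberwise (univ.filter E) g]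
  simp only [prob, Finset.filter_filter]
  congr!

lemma sum_mul_card_filter {α : Type} [Fintype α] (P : Ω → ℚ) (p : Ω → α → Prop)
    [∀ ω, DecidablePred (p ω)] :
    ∑ ω, P ω * #{a | p ω a} = ∑ a, prob P (p · a) := by
  simp only [prob, Finset.card_filter, Nat.cast_sum, Nat.cast_ite, Nat.cast_one, Nat.cast_zero,
    Finset.mul_sum, mul_ite, mul_one, mul_zero, Finset.sum_filter]
  rw [Finset.sum_comm]
  congr!

lemma sum_mul_sub_sq {P : Ω → ℚ} (hP : ∑ ω, P ω = 1) (X : Ω → ℚ) (c : ℚ) :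
    ∑ ω, P ω * (X ω - c) ^ 2
      = ∑ ω, P ω * X ω ^ 2 - 2 * c * ∑ ω, P ω * X ω + c ^ 2 := by
  have expand : ∀ ω,
      P ω * (X ω - c) ^ 2 = P ω * X ω ^ 2 - 2 * c * (P ω * X ω) + c ^ 2 * P ω :=
    fun ω => by ring
  simp only [expand, Finset.sum_add_distrib, Finset.sum_sub_distrib, ← Finset.mul_sum, hP,
    mul_one]

end Probability

lemma Fintype.sum_eq_add_mul_of_forall_ne {α : Type} [Fintype α] (f : α → ℚ) (a : α)
    {t : ℚ} (h : ∀ x ≠ a, f x = t) : ∑ x, f x = f a + (Fintype.card α - 1) * t := by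
  rw [Fintype.sum_eq_add_sum_compl a, Finset.sum_congr rfl (fun x hx => h x (by simpa using hx)),
    Finset.sum_const, Finset.card_compl, Finset.card_singleton, nsmul_eq_mul,
    Nat.cast_sub (Fintype.card_pos_iff.mpr ⟨a⟩), Nat.cast_one]

section TwoGood

variable {Ω ι κ : Type} [Fintype Ω] [Fintype ι] [Fintype κ]

def IsTwoGood (P : Ω → ℚ) (A : Ω → Matrix κ ι F) : Prop :=
  ∀ U : Matrix (Fin 2) κ F, U.rank = 2 → ∀ B : Matrix (Fin 2) ι F,
    prob P (fun ω => U * A ω = B) = 1 / (Fintype.card F : ℚ) ^ (2 * Fintype.card ι)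

variable {P : Ω → ℚ} {A : Ω → Matrix κ ι F}

lemma IsTwoGood.prob_vecMul_pair (hA : IsTwoGood P A) {x y : κ → F}
    (hxy : LinearIndependent F ![x, y]) (b c : ι → F) :
    prob P (fun ω => x ᵥ* A ω = b ∧ y ᵥ* A ω = c)
      = 1 / (Fintype.card F : ℚ) ^ (2 * Fintype.card ι) := by
  have hU : (Matrix.of ![x, y]).rank = 2 := by
    simpa using LinearIndependent.rank_matrix (M := Matrix.of ![x, y]) hxy
  rw [← hA _ hU (Matrix.of ![b, c])]
  refine prob_congr P fun ω => ?_
  simp [Fin.forall_fin_two, funext_iff, vecMul, dotProduct]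

lemma IsTwoGood.prob_vecMul (hA : IsTwoGood P A) (hκ : 2 ≤ Fintype.card κ) {x : κ → F}
    (hx : x ≠ 0) (b : ι → F) :
    prob P (fun ω => x ᵥ* A ω = b) = 1 / (Fintype.card F : ℚ) ^ Fintype.card ι := by
  obtain ⟨y, hxy⟩ := exists_linearIndependent_pair_of_one_lt_finrank
    (by rwa [Module.finrank_fintype_fun_eq_card]) hx
  have hq : (Fintype.card F : ℚ) ≠ 0 := by positivity
  rw [prob_eq_sum_prob_and P _ (fun ω => y ᵥ* A ω)]
  simp only [hA.prob_vecMul_pair hxy, Finset.sum_const, Finset.card_univ, Fintype.card_fun,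
    nsmul_eq_mul]
  push_cast
  field_simp
  ring

variable [DecidableEq κ]

lemma IsTwoGood.sum_prob_vecMul_eq_zero (hA : IsTwoGood P A) (hκ : 2 ≤ Fintype.card κ)
    (hP : ∑ ω, P ω = 1) :
    ∑ x : κ → F, prob P (fun ω => x ᵥ* A ω = 0)
      = 1 + ((Fintype.card F : ℚ) ^ Fintype.card κ - 1)
          / (Fintype.card F : ℚ) ^ Fintype.card ι := by
  rw [Fintype.sum_eq_add_mul_of_forall_ne _ 0 fun x hx => hA.prob_vecMul hκ hx 0,
    prob_of_forall P fun ω => zero_vecMul (A ω), hP]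
  simp [div_eq_mul_inv]

lemma IsTwoGood.sum_prob_vecMul_eq_zero_and (hA : IsTwoGood P A) (hκ : 2 ≤ Fintype.card κ)
    {x : κ → F} (hx : x ≠ 0) :
    ∑ y : κ → F, prob P (fun ω => x ᵥ* A ω = 0 ∧ y ᵥ* A ω = 0)
      = Fintype.card F / (Fintype.card F : ℚ) ^ Fintype.card ι
        + ((Fintype.card F : ℚ) ^ Fintype.card κ - Fintype.card F)
          / (Fintype.card F : ℚ) ^ (2 * Fintype.card ι) := by
  set line : Finset (κ → F) := univ.image fun a : F => a • x
  have hline : #line = Fintype.card F := by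
    rw [Finset.card_image_of_injective _ (smul_left_injective F hx), Finset.card_univ]
  have on_line : ∀ y ∈ line, prob P (fun ω => x ᵥ* A ω = 0 ∧ y ᵥ* A ω = 0)
      = 1 / (Fintype.card F : ℚ) ^ Fintype.card ι := by
    intro y hy
    obtain ⟨a, -, rfl⟩ := Finset.mem_image.mp hy
    rw [← hA.prob_vecMul hκ hx 0]
    refine prob_congr P fun ω => ?_
    simp only [Matrix.smul_vecMul]
    exact ⟨And.left, fun h => ⟨h, by rw [h, smul_zero]⟩⟩
  have off_line : ∀ y ∈ lineᶜ, prob P (fun ω => x ᵥ* A ω = 0 ∧ y ᵥ* A ω = 0)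
      = 1 / (Fintype.card F : ℚ) ^ (2 * Fintype.card ι) := by
    intro y hy
    refine hA.prob_vecMul_pair ((LinearIndependent.pair_iff' hx).mpr fun a hax => ?_) 0 0
    exact Finset.mem_compl.mp hy (hax ▸ Finset.mem_image_of_mem _ (Finset.mem_univ a))
  rw [← Finset.sum_add_sum_compl line, Finset.sum_congr rfl on_line,
    Finset.sum_congr rfl off_line, Finset.sum_const, Finset.sum_const, Finset.card_compl,
    hline, nsmul_eq_mul, nsmul_eq_mul, Nat.cast_sub (hline ▸ Finset.card_le_univ line)]
  simp [div_eq_mul_inv]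

lemma IsTwoGood.sum_sum_prob_vecMul_eq_zero (hA : IsTwoGood P A) (hκ : 2 ≤ Fintype.card κ)
    (hP : ∑ ω, P ω = 1) :
    ∑ x : κ → F, ∑ y : κ → F, prob P (fun ω => x ᵥ* A ω = 0 ∧ y ᵥ* A ω = 0)
      = 1 + ((Fintype.card F : ℚ) ^ Fintype.card κ - 1)
          / (Fintype.card F : ℚ) ^ Fintype.card ι
        + ((Fintype.card F : ℚ) ^ Fintype.card κ - 1)
          * (Fintype.card F / (Fintype.card F : ℚ) ^ Fintype.card ι
            + ((Fintype.card F : ℚ) ^ Fintype.card κ - Fintype.card F)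
              / (Fintype.card F : ℚ) ^ (2 * Fintype.card ι)) := by
  rw [Fintype.sum_eq_add_mul_of_forall_ne _ 0 fun x hx => hA.sum_prob_vecMul_eq_zero_and hκ hx]
  simp [hA.sum_prob_vecMul_eq_zero hκ hP]

end TwoGood

section Moments

variable {Ω ι κ : Type} [Fintype Ω] [Fintype ι] [Fintype κ] [DecidableEq κ] {P : Ω → ℚ}
  {A : Ω → Matrix κ ι F}

lemma IsTwoGood.sum_mul_card_filter_vecMul_eq_zero (hA : IsTwoGood P A)
    (hκ : 2 ≤ Fintype.card κ) (hP : ∑ ω, P ω = 1) :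
    ∑ ω, P ω * #{x | x ᵥ* A ω = 0}
      = 1 + ((Fintype.card F : ℚ) ^ Fintype.card κ - 1)
          / (Fintype.card F : ℚ) ^ Fintype.card ι := by
  rw [sum_mul_card_filter]
  exact hA.sum_prob_vecMul_eq_zero hκ hP

lemma IsTwoGood.sum_mul_card_filter_vecMul_eq_zero_sq (hA : IsTwoGood P A)
    (hκ : 2 ≤ Fintype.card κ) (hP : ∑ ω, P ω = 1) :
    ∑ ω, P ω * (#{x | x ᵥ* A ω = 0} : ℚ) ^ 2
      = 1 + ((Fintype.card F : ℚ) ^ Fintype.card κ - 1)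
          / (Fintype.card F : ℚ) ^ Fintype.card ι
        + ((Fintype.card F : ℚ) ^ Fintype.card κ - 1)
          * (Fintype.card F / (Fintype.card F : ℚ) ^ Fintype.card ι
            + ((Fintype.card F : ℚ) ^ Fintype.card κ - Fintype.card F)
              / (Fintype.card F : ℚ) ^ (2 * Fintype.card ι)) := by
  simp only [sq, ← Nat.cast_mul, ← Finset.card_product, ← Finset.filter_product,
    Finset.univ_product_univ]
  rw [sum_mul_card_filter (p := fun ω (xy : (κ → F) × (κ → F)) =>
    xy.1 ᵥ* A ω = 0 ∧ xy.2 ᵥ* A ω = 0), Fintype.sum_prod_type]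
  exact hA.sum_sum_prob_vecMul_eq_zero hκ hP

end Moments

set_option linter.unusedSectionVars false in
lemma monoMap_injective {ι : Type} (c : ι → Fˣ) (σ : Equiv.Perm ι) :
    Function.Injective (monoMap c σ) := by
  intro u v huv
  funext i
  simpa [monoMap] using congrFun huv (σ i)

lemma imgCard_eq_card_pchkCode {r n : ℕ} (M : Matrix (Fin r) (Fin n) F)
    (p : (Fin n → Fˣ) × Equiv.Perm (Fin n)) : imgCard M p = #(pchkCode M) :=
  Finset.card_image_of_injective _ (monoMap_injective p.1 p.2)

lemma imgCard_eq_pow_mul_card_filter_vecMul_eq_zero {m n : ℕ} (hmn : m ≤ n)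
    (M : Matrix (Fin (n - m)) (Fin n) F) (p : (Fin n → Fˣ) × Equiv.Perm (Fin n)) :
    imgCard M p = Fintype.card F ^ m * #{x | x ᵥ* M = 0} := by
  rw [imgCard_eq_card_pchkCode, pchkCode, card_filter_mulVec_eq_zero_eq_pow_mul _ (by simp)]
  simp [Nat.sub_sub_self hmn]

lemma Fintype.sum_div_card_mul (G : Type) [Fintype G] [Nonempty G] (a c : ℚ) :
    ∑ _g : G, a / Fintype.card G * c = a * c := by
  rw [Finset.sum_const, Finset.card_univ, nsmul_eq_mul]
  field_simp

lemma inv_mul_mul_mul_one_sub_inv_lt {q a K : ℚ} (hq : 1 ≤ q) (ha : 1 ≤ a) (hK : 1 ≤ K) :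
    K⁻¹ * (q - 1) * (a * K - 1) * (1 - K⁻¹) < a * q := by
  have hK₀ : 0 < K⁻¹ := by positivity
  have hK₁ : K⁻¹ ≤ 1 := inv_le_one_of_one_le₀ hK
  have hcancel : K⁻¹ * (a * K - 1) = a - K⁻¹ := by field_simp
  calc K⁻¹ * (q - 1) * (a * K - 1) * (1 - K⁻¹)
      = (q - 1) * (a - K⁻¹) * (1 - K⁻¹) := by rw [← hcancel]; ring
    _ ≤ (q - 1) * a * 1 := by
        gcongr <;> linarith
    _ < a * q := by linarith

theorem stmt_19_general {F : Type} [Field F] [Fintype F] {m n : ℕ}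
    (h2 : 2 ≤ n - m)
    {Ω : Type} [Fintype Ω] (P : Ω → ℚ) (hP1 : (∑ ω, P ω) = 1)
    (A : Ω → Matrix (Fin (n - m)) (Fin n) F)
    (h2good : ∀ U : Matrix (Fin 2) (Fin (n - m)) F, U.rank = 2 →
      ∀ B : Matrix (Fin 2) (Fin n) F,
        (∑ ω ∈ Finset.univ.filter (fun ω => U * A ω = B), P ω)
          = 1 / (Fintype.card F : ℚ) ^ (2 * n)) :
    (∑ ω, ∑ p : (Fin n → Fˣ) × Equiv.Perm (Fin n),
        P ω / (Fintype.card ((Fin n → Fˣ) × Equiv.Perm (Fin n)) : ℚ)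
          * (imgCard (A ω) p : ℚ))
      = (Fintype.card F : ℚ) ^ m + 1 - (Fintype.card F : ℚ) ^ ((m : ℤ) - (n : ℤ))
    ∧ (∑ ω, ∑ p : (Fin n → Fˣ) × Equiv.Perm (Fin n),
        P ω / (Fintype.card ((Fin n → Fˣ) × Equiv.Perm (Fin n)) : ℚ)
          * ((imgCard (A ω) p : ℚ)
              - ((Fintype.card F : ℚ) ^ m + 1
                  - (Fintype.card F : ℚ) ^ ((m : ℤ) - (n : ℤ)))) ^ 2)
      = (Fintype.card F : ℚ) ^ ((m : ℤ) - (n : ℤ)) * ((Fintype.card F : ℚ) - 1)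
          * ((Fintype.card F : ℚ) ^ n - 1)
          * (1 - (Fintype.card F : ℚ) ^ ((m : ℤ) - (n : ℤ)))
    ∧ (Fintype.card F : ℚ) ^ ((m : ℤ) - (n : ℤ)) * ((Fintype.card F : ℚ) - 1)
          * ((Fintype.card F : ℚ) ^ n - 1)
          * (1 - (Fintype.card F : ℚ) ^ ((m : ℤ) - (n : ℤ)))
        < (Fintype.card F : ℚ) ^ (m + 1) := by
  have hA : IsTwoGood P A := fun U hU B => by
    rw [prob, Fintype.card_fin, ← h2good U hU B]
    congr!
  have hκ : 2 ≤ Fintype.card (Fin (n - m)) := by simpa using h2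
  have hEL := hA.sum_mul_card_filter_vecMul_eq_zero hκ hP1
  have hEL2 := hA.sum_mul_card_filter_vecMul_eq_zero_sq hκ hP1
  simp only [Fintype.card_fin] at hEL hEL2
  have hqn : (Fintype.card F : ℚ) ^ n
      = (Fintype.card F : ℚ) ^ m * (Fintype.card F : ℚ) ^ (n - m) := by
    rw [← pow_add, Nat.add_sub_cancel' (by omega)]
  have hzpow :
      (Fintype.card F : ℚ) ^ ((m : ℤ) - n) = ((Fintype.card F : ℚ) ^ (n - m))⁻¹ := by
    rw [← zpow_natCast, ← _root_.zpow_neg, Nat.cast_sub (by omega), neg_sub]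
  simp only [imgCard_eq_pow_mul_card_filter_vecMul_eq_zero (by omega : m ≤ n), Nat.cast_mul,
    Nat.cast_pow, Fintype.sum_div_card_mul, hzpow]
  refine ⟨?_, ?_, ?_⟩
  · simp only [mul_left_comm (P _), ← Finset.mul_sum, hEL, hqn]
    field_simp
    ring
  · rw [sum_mul_sub_sq hP1]
    simp only [mul_pow, mul_left_comm (P _), ← Finset.mul_sum, hEL, hEL2, pow_mul', hqn]
    field_simp
    ring
  · rw [hqn, pow_succ]
    have hq : (1 : ℚ) ≤ Fintype.card F := Nat.one_le_cast.mpr Fintype.card_pos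
    exact inv_mul_mul_mul_one_sub_inv_lt hq (one_le_pow₀ hq) (one_le_pow₀ hq)

/-- Mean and variance of the size `|Ξ_n(D)|` of the image of the random code `D`
(parity-check matrix a 2-good random `(n-m) × n` matrix) under an independent uniform
random monomial map. -/
theorem stmt_19 {F : Type} [Field F] [Fintype F] {m n : ℕ}
    (hm : 0 < m) (hmn : m < n) (h2 : 2 ≤ n - m)
    {Ω : Type} [Fintype Ω] (P : Ω → ℚ) (hP0 : ∀ ω, 0 ≤ P ω) (hP1 : (∑ ω, P ω) = 1)
    (A : Ω → Matrix (Fin (n - m)) (Fin n) F)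
    (h2good : ∀ U : Matrix (Fin 2) (Fin (n - m)) F, U.rank = 2 →
      ∀ B : Matrix (Fin 2) (Fin n) F,
        (∑ ω ∈ Finset.univ.filter (fun ω => U * A ω = B), P ω)
          = 1 / (Fintype.card F : ℚ) ^ (2 * n)) :
    (∑ ω, ∑ p : (Fin n → Fˣ) × Equiv.Perm (Fin n),
        P ω / (Fintype.card ((Fin n → Fˣ) × Equiv.Perm (Fin n)) : ℚ)
          * (imgCard (A ω) p : ℚ))
      = (Fintype.card F : ℚ) ^ m + 1 - (Fintype.card F : ℚ) ^ ((m : ℤ) - (n : ℤ))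
    ∧ (∑ ω, ∑ p : (Fin n → Fˣ) × Equiv.Perm (Fin n),
        P ω / (Fintype.card ((Fin n → Fˣ) × Equiv.Perm (Fin n)) : ℚ)
          * ((imgCard (A ω) p : ℚ)
              - ((Fintype.card F : ℚ) ^ m + 1
                  - (Fintype.card F : ℚ) ^ ((m : ℤ) - (n : ℤ)))) ^ 2)
      = (Fintype.card F : ℚ) ^ ((m : ℤ) - (n : ℤ)) * ((Fintype.card F : ℚ) - 1)
          * ((Fintype.card F : ℚ) ^ n - 1)
          * (1 - (Fintype.card F : ℚ) ^ ((m : ℤ) - (n : ℤ)))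
    ∧ (Fintype.card F : ℚ) ^ ((m : ℤ) - (n : ℤ)) * ((Fintype.card F : ℚ) - 1)
          * ((Fintype.card F : ℚ) ^ n - 1)
          * (1 - (Fintype.card F : ℚ) ^ ((m : ℤ) - (n : ℤ)))
        < (Fintype.card F : ℚ) ^ (m + 1) :=
  stmt_19_general h2 P hP1 A h2good
end
end
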